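/- Let G=(V,E) be a 4-regular finite simple (2,1)-circuit containing two vertices x, y such that the graph obtained by deleting x and y is disconnected and one of its components is a complete graph K_4 on four vertices a, b, c, d, with xa, xb, yc, yd ∈ E. Let z_1, z_2 ∈ V − {a,b,c,d,y} be the two remaining neighbours of x. Then z_1a ∉ E and z_2b ∉ E, and the graph obtained from G by deleting x and its incident edges and adding the edges z_1a and z_2b is a (2,1)-circuit. -/
import Mathlib


open SimpleGraph

variable {V : Type*}

/-- The number of edges of `G` with both endpoints in `X` (denoted `i_G(X)`). -/
noncomputable def iG (G : SimpleGraph V) (X : Set V) : ℕ :=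
  {e ∈ G.edgeSet | ∀ v ∈ e, v ∈ X}.ncard

/-- The degree of a vertex. -/
noncomputable def deg (G : SimpleGraph V) (v : V) : ℕ :=
  (G.neighborSet v).ncard

/-- `G` is a (2,1)-circuit: `|E| = 2|V|` and `i_G(X) ≤ 2|X| - 1` for every proper `X ⊊ V`. -/
def IsCircuit21 [Finite V] (G : SimpleGraph V) : Prop :=
  G.edgeSet.ncard = 2 * Nat.card V ∧
    ∀ X : Set V, X ≠ Set.univ → (iG G X : ℤ) ≤ 2 * X.ncard - 1

/-- A set `X ⊊ V` is critical if `i_G(X) = 2|X| - 1`. -/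
def Critical (G : SimpleGraph V) (X : Set V) : Prop :=
  X ≠ Set.univ ∧ (iG G X : ℤ) = 2 * X.ncard - 1

/-- A critical set `X` is proper if `|X| < |V| - 1`. -/
def ProperCritical [Finite V] (G : SimpleGraph V) (X : Set V) : Prop :=
  Critical G X ∧ X.ncard + 1 < Nat.card V

/-- A set `X` is semi-critical if `i_G(X) = 2|X| - 2` and `i_G(X') ≤ 2|X'| - 2`
for every `X' ⊆ X`. -/
def SemiCritical (G : SimpleGraph V) (X : Set V) : Prop :=
  (iG G X : ℤ) = 2 * X.ncard - 2 ∧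
    ∀ X' ⊆ X, (iG G X' : ℤ) ≤ 2 * X'.ncard - 2

/-- `d(A,B)`: the number of edges `uv` with `u ∈ A - B` and `v ∈ B - A`. -/
noncomputable def dAB (G : SimpleGraph V) (A B : Set V) : ℕ :=
  {e ∈ G.edgeSet | ∃ u v, e = s(u, v) ∧ u ∈ A \ B ∧ v ∈ B \ A}.ncard

/-- `G` is essentially `k`-edge-connected: every `(k-1)`-edge-cutset is trivial, i.e.
whenever the removal of a set of `k-1` edges disconnects `G`, some component of the
resulting graph consists of a single vertex. -/
def EssEdgeConn (G : SimpleGraph V) (k : ℕ) : Prop :=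
  ∀ F : Set (Sym2 V), F ⊆ G.edgeSet → F.ncard = k - 1 →
    ¬ (G.deleteEdges F).Connected →
      ∃ v : V, ∀ w : V, (G.deleteEdges F).Reachable v w → w = v

/-- `G` is 3-connected: `|V| ≥ 4` and removing at most two vertices leaves it connected. -/
def ThreeConnected [Finite V] (G : SimpleGraph V) : Prop :=
  4 ≤ Nat.card V ∧ ∀ S : Set V, S.ncard ≤ 2 → (G.induce Sᶜ).Connected

/-- The result of a 1-reduction at `v`: delete `v` (and its incident edges) and add
the edge `a b`. -/
def reduce1 (G : SimpleGraph V) (v a b : V) :=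
  (G ⊔ SimpleGraph.fromEdgeSet {s(a, b)}).induce {x : V | x ≠ v}

/-- `v` is an admissible node: it has degree 3 and there are two non-adjacent neighbours
`a`, `b` of `v` such that the 1-reduction at `v` adding `a b` is a (2,1)-circuit. -/
def AdmissibleNode [Finite V] (G : SimpleGraph V) (v : V) : Prop :=
  deg G v = 3 ∧ ∃ a b : V, G.Adj v a ∧ G.Adj v b ∧ a ≠ b ∧ ¬ G.Adj a b ∧
    IsCircuit21 (reduce1 G v a b)

/-- `v` is contained in a subgraph of `G` isomorphic to `K₄`. -/
def InK4 (G : SimpleGraph V) (v : V) : Prop :=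
  ∃ s : Set V, v ∈ s ∧ s.ncard = 4 ∧ G.IsClique s

/-- For a degree-3 vertex `v`, a set `X ⊊ V` is `v`-critical if it is critical,
contains exactly two neighbours of `v` and does not contain `v`. -/
def VCritical (G : SimpleGraph V) (v : V) (X : Set V) : Prop :=
  Critical G X ∧ v ∉ X ∧ (X ∩ G.neighborSet v).ncard = 2

/-- The set of degree-3 vertices not contained in any copy of `K₄`. -/
def V3star (G : SimpleGraph V) : Set V :=
  {v | deg G v = 3 ∧ ¬ InK4 G v}

/-- `X` is node-critical for the node `u`: `X` is `u`-critical and the neighbour of `u`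
outside `X` has degree at least 4. -/
def NodeCritical (G : SimpleGraph V) (u : V) (X : Set V) : Prop :=
  deg G u = 3 ∧ VCritical G u X ∧ ∀ w ∈ G.neighborSet u \ X, 4 ≤ deg G w

lemma iG_insert [Finite V] (G : SimpleGraph V) (x : V) (X : Set V) (hx : x ∉ X) :
    iG G (insert x X) = iG G X + (X ∩ G.neighborSet x).ncard := by
  classical
  have hinj : Set.InjOn (fun u => s(x, u)) (X ∩ G.neighborSet x) := by
    intro u hu v hv h
    simp only [Sym2.eq, Sym2.rel_iff', Prod.mk.injEq, Prod.swap_prod_mk] at h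
    rcases h with ⟨-, h2⟩ | ⟨h1, h2⟩
    · exact h2
    · subst h2; exact absurd hu.1 hx
  have hset : {e ∈ G.edgeSet | ∀ v ∈ e, v ∈ insert x X}
      = {e ∈ G.edgeSet | ∀ v ∈ e, v ∈ X} ∪ (fun u => s(x, u)) '' (X ∩ G.neighborSet x) := by
    ext e
    induction e with
    | _ u v =>
      simp only [Set.mem_setOf_eq, Set.mem_union, Set.mem_image, Set.mem_inter_iff,
        mem_edgeSet, Sym2.mem_iff, Set.mem_insert_iff, mem_neighborSet, forall_eq_or_imp, forall_eq]
      constructor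
      · rintro ⟨hadj, hu | hu, hv | hv⟩
        · subst hu; subst hv; exact absurd rfl hadj.ne
        · subst hu; exact Or.inr ⟨v, ⟨hv, hadj⟩, rfl⟩
        · subst hv; exact Or.inr ⟨u, ⟨hu, hadj.symm⟩, Sym2.eq_swap⟩
        · exact Or.inl ⟨hadj, hu, hv⟩
      · rintro (⟨hadj, hu, hv⟩ | ⟨w, ⟨hw, hadj⟩, he⟩)
        · exact ⟨hadj, Or.inr hu, Or.inr hv⟩
        · simp only [Sym2.eq, Sym2.rel_iff', Prod.mk.injEq, Prod.swap_prod_mk] at he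
          rcases he with ⟨rfl, rfl⟩ | ⟨rfl, rfl⟩
          · exact ⟨hadj, Or.inl rfl, Or.inr hw⟩
          · exact ⟨hadj.symm, Or.inr hw, Or.inl rfl⟩
  have hdisj : Disjoint {e ∈ G.edgeSet | ∀ v ∈ e, v ∈ X}
      ((fun u => s(x, u)) '' (X ∩ G.neighborSet x)) := by
    rw [Set.disjoint_left]
    rintro e ⟨_, hall⟩ ⟨w, hw, rfl⟩
    exact hx (hall x (Sym2.mem_mk_left x w))
  rw [iG, hset, Set.ncard_union_eq hdisj (Set.toFinite _) (Set.toFinite _),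
    Set.ncard_image_of_injOn hinj]
  rfl

lemma iG_univ (G : SimpleGraph V) : iG G Set.univ = G.edgeSet.ncard := by
  unfold iG; congr 1; ext e; simp

lemma iG_sup [Finite V] (G : SimpleGraph V) (s : Set (Sym2 V)) (X : Set V)
    (hs : ∀ e ∈ s, e ∉ G.edgeSet) (hd : ∀ e ∈ s, ¬ e.IsDiag) :
    iG (G ⊔ fromEdgeSet s) X = iG G X + {e ∈ s | ∀ v ∈ e, v ∈ X}.ncard := by
  have hes : (G ⊔ fromEdgeSet s).edgeSet = G.edgeSet ∪ s := by
    rw [edgeSet_sup, edgeSet_fromEdgeSet]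
    ext e; simp only [Set.mem_union, Set.mem_diff, Set.mem_setOf_eq]
    constructor
    · rintro (h | ⟨h, -⟩); exacts [Or.inl h, Or.inr h]
    · rintro (h | h); exacts [Or.inl h, Or.inr ⟨h, hd e h⟩]
  unfold iG
  rw [hes]
  have : {e ∈ G.edgeSet ∪ s | ∀ v ∈ e, v ∈ X}
      = {e ∈ G.edgeSet | ∀ v ∈ e, v ∈ X} ∪ {e ∈ s | ∀ v ∈ e, v ∈ X} := by
    ext e; simp only [Set.mem_union, Set.mem_setOf_eq]; tauto
  rw [this, Set.ncard_union_eq ?_ (Set.toFinite _) (Set.toFinite _)]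
  rw [Set.disjoint_left]
  rintro e ⟨he, -⟩ ⟨hs', -⟩
  exact hs e hs' he

lemma iG_induce [Finite V] (H : SimpleGraph V) (S : Set V) (X : Set S) :
    iG (H.induce S) X = iG H (Subtype.val '' X) := by
  unfold iG
  rw [← Set.ncard_image_of_injective _ (Sym2.map.injective Subtype.val_injective)]
  congr 1
  ext e
  constructor
  · rintro ⟨f, hf, rfl⟩
    induction f with
    | _ p q =>
      obtain ⟨hadj, hall⟩ := hf
      refine Set.mem_setOf_eq ▸ ⟨hadj, ?_⟩
      intro w hw
      rw [Sym2.map_pair_eq, Sym2.mem_iff] at hw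
      rcases hw with rfl | rfl
      · exact ⟨p, hall p (Sym2.mem_mk_left p q), rfl⟩
      · exact ⟨q, hall q (Sym2.mem_mk_right p q), rfl⟩
  · intro he
    induction e with
    | _ u v =>
      obtain ⟨hadj, hall⟩ := he
      obtain ⟨p, hp, rfl⟩ := hall u (Sym2.mem_mk_left u v)
      obtain ⟨q, hq, rfl⟩ := hall v (Sym2.mem_mk_right (p : V) v)
      rw [← Sym2.map_pair_eq Subtype.val p q]
      refine Set.mem_image_of_mem _ ?_
      refine Set.mem_setOf_eq ▸ ⟨hadj, ?_⟩
      intro w hw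
      rw [Sym2.mem_iff] at hw
      rcases hw with rfl | rfl
      · exact hp
      · exact hq

lemma ncard3_le (u v w : V) : ({u, v, w} : Set V).ncard ≤ 3 := by
  refine le_trans (Set.ncard_insert_le _ _) ?_
  have := Set.ncard_insert_le v ({w} : Set V)
  simp only [Set.ncard_singleton] at this
  omega

lemma ncard3 (u v w : V) (h1 : u ≠ v) (h2 : u ≠ w) (h3 : v ≠ w) :
    ({u, v, w} : Set V).ncard = 3 := by
  rw [Set.ncard_insert_of_notMem (by simp [h1, h2]) (Set.toFinite _), Set.ncard_pair h3]

lemma ncard4 (u v w z : V) (h1 : u ≠ v) (h2 : u ≠ w) (h3 : u ≠ z) (h4 : v ≠ w)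
    (h5 : v ≠ z) (h6 : w ≠ z) : ({u, v, w, z} : Set V).ncard = 4 := by
  rw [Set.ncard_insert_of_notMem (by simp [h1, h2, h3]) (Set.toFinite _), ncard3 _ _ _ h4 h5 h6]

lemma ne_univ_of_notMem {X : Set V} {w : V} (h : w ∉ X) : X ≠ Set.univ := by
  intro hu; rw [hu] at h; exact h (Set.mem_univ w)

/-- Circuit inequality after inserting a vertex. -/
lemma circuit_ineq [Finite V] (G : SimpleGraph V) (hG : IsCircuit21 G) (X : Set V)
    (v w : V) (hv : v ∉ X) (hwv : w ≠ v) (hwX : w ∉ X) :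
    (iG G X : ℤ) + ((X ∩ G.neighborSet v).ncard : ℤ) ≤ 2 * X.ncard + 1 := by
  have h1 := hG.2 (insert v X) (ne_univ_of_notMem (X := insert v X) (w := w) (by simp [hwv, hwX]))
  rw [iG_insert G v X hv, Set.ncard_insert_of_notMem hv (Set.toFinite _)] at h1
  push_cast at h1
  linarith

lemma key1 [Finite V] (G : SimpleGraph V) (hG : IsCircuit21 G)
    (x a b c d y z₁ z₂ : V)
    (hNx : G.neighborSet x = {a, b, z₁, z₂})
    (hNa : G.neighborSet a = {b, c, d, x})
    (hNb : G.neighborSet b = {a, c, d, x})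
    (hNc : G.neighborSet c = {a, b, d, y})
    (hNd : G.neighborSet d = {a, b, c, y})
    (hab : a ≠ b) (hac : a ≠ c) (had : a ≠ d) (hbc : b ≠ c) (hbd : b ≠ d) (hcd : c ≠ d)
    (hax : a ≠ x) (hbx : b ≠ x) (hcx : c ≠ x) (hdx : d ≠ x)
    (hay : a ≠ y) (hcy : c ≠ y)
    (hz1a : z₁ ≠ a) (hz1b : z₁ ≠ b) (hz1x : z₁ ≠ x)
    (hz2a : z₂ ≠ a) (hz2b : z₂ ≠ b) (hz2x : z₂ ≠ x) (hz12 : z₁ ≠ z₂)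
    (X : Set V) (hxX : x ∉ X) (haX : a ∈ X) (hz1X : z₁ ∈ X)
    (hw : ∃ w, w ≠ x ∧ w ∉ X) :
    (iG G X : ℤ) ≤ 2 * X.ncard - 2 := by
  by_contra hcon
  push_neg at hcon
  have lb : (2 * X.ncard - 1 : ℤ) ≤ iG G X := by linarith
  obtain ⟨w, hwx, hwX⟩ := hw
  -- b ∉ X
  have hbX : b ∉ X := by
    intro hb
    have hsub : ({a, z₁, b} : Set V) ⊆ X ∩ G.neighborSet x := by
      intro v hv
      simp only [Set.mem_insert_iff, Set.mem_singleton_iff] at hv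
      rcases hv with rfl | rfl | rfl
      · exact ⟨haX, by rw [hNx]; simp⟩
      · exact ⟨hz1X, by rw [hNx]; simp⟩
      · exact ⟨hb, by rw [hNx]; simp⟩
    have h3 : 3 ≤ ((X ∩ G.neighborSet x).ncard : ℤ) := by
      have := Set.ncard_le_ncard hsub (Set.toFinite _)
      rw [ncard3 _ _ _ (Ne.symm hz1a) hab hz1b] at this
      exact_mod_cast this
    have := circuit_ineq G hG X x w hxX hwx hwX
    linarith
  -- z₂ ∉ X
  have hz2X : z₂ ∉ X := by
    intro hz2
    have hsub : ({a, z₁, z₂} : Set V) ⊆ X ∩ G.neighborSet x := by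
      intro v hv
      simp only [Set.mem_insert_iff, Set.mem_singleton_iff] at hv
      rcases hv with rfl | rfl | rfl
      · exact ⟨haX, by rw [hNx]; simp⟩
      · exact ⟨hz1X, by rw [hNx]; simp⟩
      · exact ⟨hz2, by rw [hNx]; simp⟩
    have h3 : 3 ≤ ((X ∩ G.neighborSet x).ncard : ℤ) := by
      have := Set.ncard_le_ncard hsub (Set.toFinite _)
      rw [ncard3 _ _ _ (Ne.symm hz1a) (Ne.symm hz2a) hz12] at this
      exact_mod_cast this
    have := circuit_ineq G hG X x w hxX hwx hwX
    linarith
  -- the set Y = insert x X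
  set Y := insert x X with hY
  have hYcard : (Y.ncard : ℤ) = X.ncard + 1 := by
    rw [hY, Set.ncard_insert_of_notMem hxX (Set.toFinite _)]; push_cast; ring
  have lbY : (2 * Y.ncard - 1 : ℤ) ≤ iG G Y := by
    have hi := iG_insert G x X hxX
    have hsub : ({a, z₁} : Set V) ⊆ X ∩ G.neighborSet x := by
      intro v hv
      simp only [Set.mem_insert_iff, Set.mem_singleton_iff] at hv
      rcases hv with rfl | rfl
      · exact ⟨haX, by rw [hNx]; simp⟩
      · exact ⟨hz1X, by rw [hNx]; simp⟩
    have h2 : 2 ≤ ((X ∩ G.neighborSet x).ncard : ℤ) := by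
      have := Set.ncard_le_ncard hsub (Set.toFinite _)
      rw [Set.ncard_pair (Ne.symm hz1a)] at this
      exact_mod_cast this
    have : (iG G Y : ℤ) = iG G X + (X ∩ G.neighborSet x).ncard := by exact_mod_cast hi
    linarith
  have haY : a ∈ Y := Set.mem_insert_of_mem _ haX
  have hxY : x ∈ Y := Set.mem_insert _ _
  have hbY : b ∉ Y := by simp [hY, hbx, hbX]
  have hz2Y : z₂ ∉ Y := by simp [hY, hz2x, hz2X]
  -- c ∉ X and d ∉ X
  have hcdX : c ∉ X ∧ d ∉ X := by
    by_cases hc : c ∈ X <;> by_cases hd : d ∈ X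
    · exfalso
      have hsub : ({a, c, d, x} : Set V) ⊆ Y ∩ G.neighborSet b := by
        intro v hv
        simp only [Set.mem_insert_iff, Set.mem_singleton_iff] at hv
        rcases hv with rfl | rfl | rfl | rfl
        · exact ⟨haY, by rw [hNb]; simp⟩
        · exact ⟨Set.mem_insert_of_mem _ hc, by rw [hNb]; simp⟩
        · exact ⟨Set.mem_insert_of_mem _ hd, by rw [hNb]; simp⟩
        · exact ⟨hxY, by rw [hNb]; simp⟩
      have h4 : 4 ≤ ((Y ∩ G.neighborSet b).ncard : ℤ) := by
        have := Set.ncard_le_ncard hsub (Set.toFinite _)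
        rw [ncard4 _ _ _ _ hac had hax hcd hcx hdx] at this
        exact_mod_cast this
      have := circuit_ineq G hG Y b z₂ hbY hz2b hz2Y
      linarith
    · exfalso
      have hsub : ({a, c, x} : Set V) ⊆ Y ∩ G.neighborSet b := by
        intro v hv
        simp only [Set.mem_insert_iff, Set.mem_singleton_iff] at hv
        rcases hv with rfl | rfl | rfl
        · exact ⟨haY, by rw [hNb]; simp⟩
        · exact ⟨Set.mem_insert_of_mem _ hc, by rw [hNb]; simp⟩
        · exact ⟨hxY, by rw [hNb]; simp⟩
      have h3 : 3 ≤ ((Y ∩ G.neighborSet b).ncard : ℤ) := by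
        have := Set.ncard_le_ncard hsub (Set.toFinite _)
        rw [ncard3 _ _ _ hac hax hcx] at this
        exact_mod_cast this
      have := circuit_ineq G hG Y b d hbY hbd.symm (by simp [hY, hdx, hd])
      linarith
    · exfalso
      have hsub : ({a, d, x} : Set V) ⊆ Y ∩ G.neighborSet b := by
        intro v hv
        simp only [Set.mem_insert_iff, Set.mem_singleton_iff] at hv
        rcases hv with rfl | rfl | rfl
        · exact ⟨haY, by rw [hNb]; simp⟩
        · exact ⟨Set.mem_insert_of_mem _ hd, by rw [hNb]; simp⟩
        · exact ⟨hxY, by rw [hNb]; simp⟩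
      have h3 : 3 ≤ ((Y ∩ G.neighborSet b).ncard : ℤ) := by
        have := Set.ncard_le_ncard hsub (Set.toFinite _)
        rw [ncard3 _ _ _ had hax hdx] at this
        exact_mod_cast this
      have := circuit_ineq G hG Y b c hbY hbc.symm (by simp [hY, hcx, hc])
      linarith
    · exact ⟨hc, hd⟩
  obtain ⟨hcX, hdX⟩ := hcdX
  by_cases hyX : y ∈ X
  · -- chain: insert c, then contradiction at d
    have hcY : c ∉ Y := by simp [hY, hcx, hcX]
    set Y₁ := insert c Y with hY1
    have hY1card : (Y₁.ncard : ℤ) = Y.ncard + 1 := by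
      rw [hY1, Set.ncard_insert_of_notMem hcY (Set.toFinite _)]; push_cast; ring
    have lbY1 : (2 * Y₁.ncard - 1 : ℤ) ≤ iG G Y₁ := by
      have hi : (iG G Y₁ : ℤ) = iG G Y + (Y ∩ G.neighborSet c).ncard := by
        exact_mod_cast iG_insert G c Y hcY
      have hsub : ({a, y} : Set V) ⊆ Y ∩ G.neighborSet c := by
        intro v hv
        simp only [Set.mem_insert_iff, Set.mem_singleton_iff] at hv
        rcases hv with rfl | rfl
        · exact ⟨haY, by rw [hNc]; simp⟩
        · exact ⟨Set.mem_insert_of_mem _ hyX, by rw [hNc]; simp⟩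
      have h2 : 2 ≤ ((Y ∩ G.neighborSet c).ncard : ℤ) := by
        have := Set.ncard_le_ncard hsub (Set.toFinite _)
        rw [Set.ncard_pair hay] at this
        exact_mod_cast this
      linarith
    have hsub : ({a, c, y} : Set V) ⊆ Y₁ ∩ G.neighborSet d := by
      intro v hv
      simp only [Set.mem_insert_iff, Set.mem_singleton_iff] at hv
      rcases hv with rfl | rfl | rfl
      · exact ⟨Set.mem_insert_of_mem _ haY, by rw [hNd]; simp⟩
      · exact ⟨Set.mem_insert _ _, by rw [hNd]; simp⟩
      · exact ⟨Set.mem_insert_of_mem _ (Set.mem_insert_of_mem _ hyX), by rw [hNd]; simp⟩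
    have h3 : 3 ≤ ((Y₁ ∩ G.neighborSet d).ncard : ℤ) := by
      have := Set.ncard_le_ncard hsub (Set.toFinite _)
      rw [ncard3 _ _ _ hac hay hcy] at this
      exact_mod_cast this
    have hdY1 : d ∉ Y₁ := by simp [hY1, hY, hcd.symm, hdx, hdX]
    have hbY1 : b ∉ Y₁ := by simp [hY1, hY, hbc, hbx, hbX]
    have := circuit_ineq G hG Y₁ d b hdY1 hbd hbY1
    linarith
  · -- final case: a has no neighbours in X
    set Z := X \ {a} with hZ
    have haZ : a ∉ Z := by simp [hZ]
    have hXZ : insert a Z = X := by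
      rw [hZ, Set.insert_diff_singleton, Set.insert_eq_self.2 haX]
    have hZcard : (X.ncard : ℤ) = Z.ncard + 1 := by
      rw [← hXZ, Set.ncard_insert_of_notMem haZ (Set.toFinite _)]; push_cast; ring
    have hempty : Z ∩ G.neighborSet a = ∅ := by
      ext v
      simp only [Set.mem_inter_iff, Set.mem_empty_iff_false, iff_false, not_and]
      intro hvZ hvN
      rw [hNa] at hvN
      simp only [Set.mem_insert_iff, Set.mem_singleton_iff] at hvN
      have hvX : v ∈ X := hvZ.1
      rcases hvN with rfl | rfl | rfl | rfl
      · exact hbX hvX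
      · exact hcX hvX
      · exact hdX hvX
      · exact hxX hvX
    have hi : (iG G X : ℤ) = iG G Z := by
      have := iG_insert G a Z haZ
      rw [hXZ, hempty] at this
      simp only [Set.ncard_empty, add_zero] at this
      exact_mod_cast this
    have hZb := hG.2 Z (ne_univ_of_notMem haZ)
    linarith

lemma key2 [Finite V] (G : SimpleGraph V) (hG : IsCircuit21 G)
    (x a b z₁ z₂ : V)
    (hNx : G.neighborSet x = {a, b, z₁, z₂})
    (hab : a ≠ b) (hz1a : z₁ ≠ a) (hz1b : z₁ ≠ b)
    (hz2a : z₂ ≠ a) (hz2b : z₂ ≠ b) (hz12 : z₁ ≠ z₂)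
    (X : Set V) (hxX : x ∉ X) (haX : a ∈ X) (hbX : b ∈ X)
    (hz1X : z₁ ∈ X) (hz2X : z₂ ∈ X)
    (hw : ∃ w, w ≠ x ∧ w ∉ X) :
    (iG G X : ℤ) ≤ 2 * X.ncard - 3 := by
  by_contra hcon
  push_neg at hcon
  obtain ⟨w, hwx, hwX⟩ := hw
  have hsub : ({a, b, z₁, z₂} : Set V) ⊆ X ∩ G.neighborSet x := by
    intro v hv
    simp only [Set.mem_insert_iff, Set.mem_singleton_iff] at hv
    rcases hv with rfl | rfl | rfl | rfl
    · exact ⟨haX, by rw [hNx]; simp⟩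
    · exact ⟨hbX, by rw [hNx]; simp⟩
    · exact ⟨hz1X, by rw [hNx]; simp⟩
    · exact ⟨hz2X, by rw [hNx]; simp⟩
  have h4 : 4 ≤ ((X ∩ G.neighborSet x).ncard : ℤ) := by
    have := Set.ncard_le_ncard hsub (Set.toFinite _)
    rw [ncard4 _ _ _ _ hab (Ne.symm hz1a) (Ne.symm hz2a) (Ne.symm hz1b) (Ne.symm hz2b) hz12]
      at this
    exact_mod_cast this
  have := circuit_ineq G hG X x w hxX hwx hwX
  linarith

set_option maxHeartbeats 1000000 in
theorem stmt15 [Finite V] (G : SimpleGraph V) (hG : IsCircuit21 G)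
    (hreg : ∀ v, deg G v = 4)
    (x y a b c d z₁ z₂ : V) (hxy : x ≠ y)
    (hdis : ¬ (G.induce (({x, y} : Set V)ᶜ)).Connected)
    (habcd : ({a, b, c, d} : Set V).ncard = 4)
    (hdisj : ({a, b, c, d} : Set V) ∩ {x, y} = ∅)
    (hclique : G.IsClique {a, b, c, d})
    (hcomp : ∀ u w : ↥(({x, y} : Set V)ᶜ), (u : V) ∈ ({a, b, c, d} : Set V) →
        ((G.induce (({x, y} : Set V)ᶜ)).Reachable u w ↔ (w : V) ∈ ({a, b, c, d} : Set V)))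
    (hxa : G.Adj x a) (hxb : G.Adj x b) (hyc : G.Adj y c) (hyd : G.Adj y d)
    (hz : z₁ ≠ z₂)
    (hz1 : z₁ ∉ ({a, b, c, d, y} : Set V)) (hz2 : z₂ ∉ ({a, b, c, d, y} : Set V))
    (hNx : G.neighborSet x = {a, b, z₁, z₂}) :
    ¬ G.Adj z₁ a ∧ ¬ G.Adj z₂ b ∧
      IsCircuit21
        ((G ⊔ SimpleGraph.fromEdgeSet {s(z₁, a), s(z₂, b)}).induce {w : V | w ≠ x}) := by
  classical
  -- distinctness of a b c d
  have hdistinct : ∀ u v w : V, ({a,b,c,d} : Set V) ⊆ {u,v,w} → False := by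
    intro u v w hsub
    have h1 : ({a,b,c,d} : Set V).ncard ≤ ({u,v,w} : Set V).ncard :=
      Set.ncard_le_ncard hsub (Set.toFinite _)
    have h2 := ncard3_le u v w
    omega
  have hab : a ≠ b := by rintro rfl; exact hdistinct a c d (by intro p hp; simp at hp ⊢; tauto)
  have hac : a ≠ c := by rintro rfl; exact hdistinct a b d (by intro p hp; simp at hp ⊢; tauto)
  have had : a ≠ d := by rintro rfl; exact hdistinct a b c (by intro p hp; simp at hp ⊢; tauto)
  have hbc : b ≠ c := by rintro rfl; exact hdistinct a b d (by intro p hp; simp at hp ⊢; tauto)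
  have hbd : b ≠ d := by rintro rfl; exact hdistinct a b c (by intro p hp; simp at hp ⊢; tauto)
  have hcd : c ≠ d := by rintro rfl; exact hdistinct a b c (by intro p hp; simp at hp ⊢; tauto)
  -- x, y not among a b c d
  have hmemd : ∀ v : V, v ∈ ({a,b,c,d} : Set V) → v ∈ ({x,y} : Set V) → False := by
    intro v h1 h2
    have : v ∈ ({a,b,c,d} : Set V) ∩ {x,y} := ⟨h1, h2⟩
    rw [hdisj] at this
    exact this
  have hax : a ≠ x := fun h => hmemd a (by simp) (by simp [h])
  have hbx : b ≠ x := fun h => hmemd b (by simp) (by simp [h])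
  have hcx : c ≠ x := fun h => hmemd c (by simp) (by simp [h])
  have hdx : d ≠ x := fun h => hmemd d (by simp) (by simp [h])
  have hay : a ≠ y := fun h => hmemd a (by simp) (by simp [h])
  have hby : b ≠ y := fun h => hmemd b (by simp) (by simp [h])
  have hcy : c ≠ y := fun h => hmemd c (by simp) (by simp [h])
  have hdy : d ≠ y := fun h => hmemd d (by simp) (by simp [h])
  -- z distinctness
  simp only [Set.mem_insert_iff, Set.mem_singleton_iff, not_or] at hz1 hz2
  obtain ⟨hz1a, hz1b, hz1c, hz1d, hz1y⟩ := hz1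
  obtain ⟨hz2a, hz2b, hz2c, hz2d, hz2y⟩ := hz2
  have hz1x : z₁ ≠ x := by
    have : z₁ ∈ G.neighborSet x := by rw [hNx]; simp
    exact (G.ne_of_adj ((SimpleGraph.mem_neighborSet G x z₁).1 this)).symm
  have hz2x : z₂ ≠ x := by
    have : z₂ ∈ G.neighborSet x := by rw [hNx]; simp
    exact (G.ne_of_adj ((SimpleGraph.mem_neighborSet G x z₂).1 this)).symm
  -- clique adjacencies
  have hAab : G.Adj a b := hclique (by simp) (by simp) hab
  have hAac : G.Adj a c := hclique (by simp) (by simp) hac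
  have hAad : G.Adj a d := hclique (by simp) (by simp) had
  have hAbc : G.Adj b c := hclique (by simp) (by simp) hbc
  have hAbd : G.Adj b d := hclique (by simp) (by simp) hbd
  have hAcd : G.Adj c d := hclique (by simp) (by simp) hcd
  -- neighbour sets
  have hdeg : ∀ v : V, (G.neighborSet v).ncard = 4 := fun v => hreg v
  have hNa : G.neighborSet a = {b, c, d, x} := by
    have hsub : ({b,c,d,x} : Set V) ⊆ G.neighborSet a := by
      intro v hv
      simp only [Set.mem_insert_iff, Set.mem_singleton_iff] at hv
      rw [SimpleGraph.mem_neighborSet]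
      rcases hv with rfl | rfl | rfl | rfl
      exacts [hAab, hAac, hAad, hxa.symm]
    refine (Set.eq_of_subset_of_ncard_le hsub ?_ (Set.toFinite _)).symm
    rw [hdeg a, ncard4 _ _ _ _ hbc hbd hbx hcd hcx hdx]
  have hNb : G.neighborSet b = {a, c, d, x} := by
    have hsub : ({a,c,d,x} : Set V) ⊆ G.neighborSet b := by
      intro v hv
      simp only [Set.mem_insert_iff, Set.mem_singleton_iff] at hv
      rw [SimpleGraph.mem_neighborSet]
      rcases hv with rfl | rfl | rfl | rfl
      exacts [hAab.symm, hAbc, hAbd, hxb.symm]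
    refine (Set.eq_of_subset_of_ncard_le hsub ?_ (Set.toFinite _)).symm
    rw [hdeg b, ncard4 _ _ _ _ hac had hax hcd hcx hdx]
  have hNc : G.neighborSet c = {a, b, d, y} := by
    have hsub : ({a,b,d,y} : Set V) ⊆ G.neighborSet c := by
      intro v hv
      simp only [Set.mem_insert_iff, Set.mem_singleton_iff] at hv
      rw [SimpleGraph.mem_neighborSet]
      rcases hv with rfl | rfl | rfl | rfl
      exacts [hAac.symm, hAbc.symm, hAcd, hyc.symm]
    refine (Set.eq_of_subset_of_ncard_le hsub ?_ (Set.toFinite _)).symm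
    rw [hdeg c, ncard4 _ _ _ _ hab had hay hbd hby hdy]
  have hNd : G.neighborSet d = {a, b, c, y} := by
    have hsub : ({a,b,c,y} : Set V) ⊆ G.neighborSet d := by
      intro v hv
      simp only [Set.mem_insert_iff, Set.mem_singleton_iff] at hv
      rw [SimpleGraph.mem_neighborSet]
      rcases hv with rfl | rfl | rfl | rfl
      exacts [hAad.symm, hAbd.symm, hAcd.symm, hyd.symm]
    refine (Set.eq_of_subset_of_ncard_le hsub ?_ (Set.toFinite _)).symm
    rw [hdeg d, ncard4 _ _ _ _ hab hac hay hbc hby hcy]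
  -- non-adjacency of z₁ a and z₂ b
  have hnz1a : ¬ G.Adj z₁ a := by
    intro h
    have : z₁ ∈ G.neighborSet a := (SimpleGraph.mem_neighborSet G a z₁).2 h.symm
    rw [hNa] at this
    simp only [Set.mem_insert_iff, Set.mem_singleton_iff] at this
    rcases this with h' | h' | h' | h'
    exacts [hz1b h', hz1c h', hz1d h', hz1x h']
  have hnz2b : ¬ G.Adj z₂ b := by
    intro h
    have : z₂ ∈ G.neighborSet b := (SimpleGraph.mem_neighborSet G b z₂).2 h.symm
    rw [hNb] at this
    simp only [Set.mem_insert_iff, Set.mem_singleton_iff] at this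
    rcases this with h' | h' | h' | h'
    exacts [hz2a h', hz2c h', hz2d h', hz2x h']
  refine ⟨hnz1a, hnz2b, ?_⟩
  -- the reduced graph
  have he12 : s(z₁, a) ≠ s(z₂, b) := by
    intro h
    simp only [Sym2.eq, Sym2.rel_iff', Prod.mk.injEq, Prod.swap_prod_mk] at h
    rcases h with ⟨h1, h2⟩ | ⟨h1, h2⟩
    · exact hz h1
    · exact hz1b h1
  have hs : ∀ e ∈ ({s(z₁, a), s(z₂, b)} : Set (Sym2 V)), e ∉ G.edgeSet := by
    intro e he
    simp only [Set.mem_insert_iff, Set.mem_singleton_iff] at he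
    rcases he with rfl | rfl
    · rw [SimpleGraph.mem_edgeSet]; exact hnz1a
    · rw [SimpleGraph.mem_edgeSet]; exact hnz2b
  have hdg : ∀ e ∈ ({s(z₁, a), s(z₂, b)} : Set (Sym2 V)), ¬ e.IsDiag := by
    intro e he
    simp only [Set.mem_insert_iff, Set.mem_singleton_iff] at he
    rcases he with rfl | rfl
    · simp [Sym2.isDiag_iff_proj_eq, hz1a]
    · simp [Sym2.isDiag_iff_proj_eq, hz2b]
  set H := G ⊔ SimpleGraph.fromEdgeSet {s(z₁, a), s(z₂, b)} with hH
  set S : Set V := {w : V | w ≠ x} with hSdef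
  have hxS : x ∉ S := by simp [hSdef]
  have huniv : insert x S = Set.univ := by
    ext v; simp only [Set.mem_insert_iff, Set.mem_univ, iff_true, hSdef, Set.mem_setOf_eq]
    tauto
  have hNHx : H.neighborSet x = {a, b, z₁, z₂} := by
    have : H.neighborSet x = G.neighborSet x := by
      ext v
      simp only [SimpleGraph.mem_neighborSet, hH, SimpleGraph.sup_adj,
        SimpleGraph.fromEdgeSet_adj, Set.mem_insert_iff, Set.mem_singleton_iff]
      constructor
      · rintro (h | ⟨h | h, hne⟩)
        · exact h
        · exfalso
          simp only [Sym2.eq, Sym2.rel_iff', Prod.mk.injEq, Prod.swap_prod_mk] at h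
          rcases h with ⟨h1, h2⟩ | ⟨h1, h2⟩
          · exact hz1x h1.symm
          · exact hax h1.symm
        · exfalso
          simp only [Sym2.eq, Sym2.rel_iff', Prod.mk.injEq, Prod.swap_prod_mk] at h
          rcases h with ⟨h1, h2⟩ | ⟨h1, h2⟩
          · exact hz2x h1.symm
          · exact hbx h1.symm
      · exact fun h => Or.inl h
    rw [this, hNx]
  have hSN : S ∩ H.neighborSet x = {a, b, z₁, z₂} := by
    rw [hNHx]
    ext v
    simp only [Set.mem_inter_iff, hSdef, Set.mem_setOf_eq, Set.mem_insert_iff,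
      Set.mem_singleton_iff]
    constructor
    · exact fun h => h.2
    · rintro (rfl | rfl | rfl | rfl)
      exacts [⟨hax, by tauto⟩, ⟨hbx, by tauto⟩, ⟨hz1x, by tauto⟩, ⟨hz2x, by tauto⟩]
  have hcard4 : ({a, b, z₁, z₂} : Set V).ncard = 4 :=
    ncard4 _ _ _ _ hab (Ne.symm hz1a) (Ne.symm hz2a) (Ne.symm hz1b) (Ne.symm hz2b) hz
  -- H edge count
  have hHuniv : iG H Set.univ = 2 * Nat.card V + 2 := by
    rw [hH, iG_sup G _ Set.univ hs hdg]
    have h1 : {e ∈ ({s(z₁, a), s(z₂, b)} : Set (Sym2 V)) | ∀ v ∈ e, v ∈ Set.univ}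
        = {s(z₁, a), s(z₂, b)} := by
      ext e; simp
    rw [h1, iG_univ, hG.1, Set.ncard_pair he12]
  have hHS : iG H S + 4 = 2 * Nat.card V + 2 := by
    have := iG_insert H x S hxS
    rw [huniv, hHuniv, hSN, hcard4] at this
    omega
  have hcardS : S.ncard + 1 = Nat.card V := by
    have h1 : (insert x S).ncard = S.ncard + 1 :=
      Set.ncard_insert_of_notMem hxS (Set.toFinite _)
    rw [huniv, Set.ncard_univ] at h1
    omega
  have hcardS' : Nat.card ↥S = S.ncard := Nat.card_coe_set_eq S
  constructor
  · -- edge count of reduced graph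
    rw [← iG_univ, iG_induce]
    have himg : Subtype.val '' (Set.univ : Set ↥S) = S := by
      rw [Set.image_univ, Subtype.range_coe]
    rw [himg, hcardS']
    omega
  · -- counting inequality
    intro X hX
    obtain ⟨u, hu⟩ := Set.ne_univ_iff_exists_notMem X |>.1 hX
    set Xb := Subtype.val '' X with hXb
    have hwx : (u : V) ≠ x := u.2
    have hwXb : (u : V) ∉ Xb := by
      rintro ⟨p, hp, hpe⟩
      exact hu ((Subtype.ext hpe) ▸ hp)
    have hwit : ∃ w, w ≠ x ∧ w ∉ Xb := ⟨u, hwx, hwXb⟩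
    have hxXb : x ∉ Xb := by
      rintro ⟨p, hp, hpe⟩
      exact p.2 hpe
    have hcardX : Xb.ncard = X.ncard := Set.ncard_image_of_injective X Subtype.val_injective
    rw [iG_induce, ← hXb, iG_sup G _ Xb hs hdg]
    have hmem1 : (∀ v ∈ s(z₁, a), v ∈ Xb) ↔ (z₁ ∈ Xb ∧ a ∈ Xb) := by
      simp [Sym2.mem_iff, forall_eq_or_imp]
    have hmem2 : (∀ v ∈ s(z₂, b), v ∈ Xb) ↔ (z₂ ∈ Xb ∧ b ∈ Xb) := by
      simp [Sym2.mem_iff, forall_eq_or_imp]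
    set T := {e ∈ ({s(z₁, a), s(z₂, b)} : Set (Sym2 V)) | ∀ v ∈ e, v ∈ Xb} with hT
    by_cases h1 : z₁ ∈ Xb ∧ a ∈ Xb <;> by_cases h2 : z₂ ∈ Xb ∧ b ∈ Xb
    · -- both extra edges inside
      have hTle : T.ncard ≤ 2 := by
        have : T ⊆ {s(z₁, a), s(z₂, b)} := fun e he => he.1
        calc T.ncard ≤ ({s(z₁, a), s(z₂, b)} : Set (Sym2 V)).ncard :=
              Set.ncard_le_ncard this (Set.toFinite _)
          _ = 2 := Set.ncard_pair he12
      have hk := key2 G hG x a b z₁ z₂ hNx hab hz1a hz1b hz2a hz2b hz Xb hxXb h1.2 h2.2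
        h1.1 h2.1 hwit
      push_cast
      rw [hcardX] at hk
      push_cast at hk
      have : (T.ncard : ℤ) ≤ 2 := by exact_mod_cast hTle
      linarith
    · -- only z₁a inside
      have hTle : T.ncard ≤ 1 := by
        have hsub : T ⊆ {s(z₁, a)} := by
          rintro e ⟨he, hp⟩
          simp only [Set.mem_insert_iff, Set.mem_singleton_iff] at he ⊢
          rcases he with rfl | rfl
          · rfl
          · exact absurd (hmem2.1 hp) h2
        calc T.ncard ≤ ({s(z₁, a)} : Set (Sym2 V)).ncard :=
              Set.ncard_le_ncard hsub (Set.toFinite _)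
          _ = 1 := Set.ncard_singleton _
      have hk := key1 G hG x a b c d y z₁ z₂ hNx hNa hNb hNc hNd hab hac had hbc hbd hcd
        hax hbx hcx hdx hay hcy hz1a hz1b hz1x hz2a hz2b hz2x hz Xb hxXb h1.2 h1.1 hwit
      push_cast
      rw [hcardX] at hk
      push_cast at hk
      have : (T.ncard : ℤ) ≤ 1 := by exact_mod_cast hTle
      linarith
    · -- only z₂b inside
      have hTle : T.ncard ≤ 1 := by
        have hsub : T ⊆ {s(z₂, b)} := by
          rintro e ⟨he, hp⟩
          simp only [Set.mem_insert_iff, Set.mem_singleton_iff] at he ⊢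
          rcases he with rfl | rfl
          · exact absurd (hmem1.1 hp) h1
          · rfl
        calc T.ncard ≤ ({s(z₂, b)} : Set (Sym2 V)).ncard :=
              Set.ncard_le_ncard hsub (Set.toFinite _)
          _ = 1 := Set.ncard_singleton _
      have hNx' : G.neighborSet x = {b, a, z₂, z₁} := by
        rw [hNx, Set.insert_comm a b, Set.pair_comm z₁ z₂]
      have hNc' : G.neighborSet c = {b, a, d, y} := by
        rw [hNc, Set.insert_comm a b]
      have hNd' : G.neighborSet d = {b, a, c, y} := by
        rw [hNd, Set.insert_comm a b]
      have hk := key1 G hG x b a c d y z₂ z₁ hNx' hNb hNa hNc' hNd' hab.symm hbc hbd hac had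
        hcd hbx hax hcx hdx hby hcy hz2b hz2a hz2x hz1b hz1a hz1x hz.symm Xb hxXb h2.2 h2.1
        hwit
      push_cast
      rw [hcardX] at hk
      push_cast at hk
      have : (T.ncard : ℤ) ≤ 1 := by exact_mod_cast hTle
      linarith
    · -- no extra edge inside
      have hTle : T.ncard = 0 := by
        have hsub : T ⊆ ∅ := by
          rintro e ⟨he, hp⟩
          simp only [Set.mem_insert_iff, Set.mem_singleton_iff] at he
          rcases he with rfl | rfl
          · exact absurd (hmem1.1 hp) h1
          · exact absurd (hmem2.1 hp) h2
        simpa using Set.ncard_le_ncard hsub (Set.toFinite _)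
      have hk := hG.2 Xb (ne_univ_of_notMem hxXb)
      push_cast
      rw [hcardX] at hk
      push_cast at hk
      rw [hTle]
      push_cast
      linarith
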